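/- Suppose ∇F(v*) = 0 and ∇²F(v*) is positive definite, where F(v) = f(v⊙v). Let x* = v* ⊙ v*. Then x* satisfies second-order sufficient conditions with strict complementarity for min f(x) subject to x ≥ 0: x* ≥ 0, ∇f(x*) ≥ 0, for each i exactly one of x*_i and [∇f(x*)]_i is nonzero, and wᵀ∇²f(x*)w > 0 for all w ≠ 0 with w_i = 0 whenever x*_i = 0. -/

import Mathlib

/-!
With `x = v ⊙ v` the chain rule gives `∇F(v) = 2 v ⊙ ∇f(x)` and
`sᵀ∇²F(v)s = 4 (v ⊙ s)ᵀ∇²f(x)(v ⊙ s) + 2 ∇f(x)ᵀ(s ⊙ s)`. The first identity gives complementarity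
`vᵢ [∇f(x)]ᵢ = 0`. Testing the second on `s = eᵢ` with `vᵢ = 0` gives `[∇f(x)]ᵢ > 0`, and testing
it on `s = w ⊘ v` gives positivity of `∇²f(x)` on the face, since the gradient term vanishes there.
-/

noncomputable def grad {n : ℕ} (f : (Fin n → ℝ) → ℝ) (x : Fin n → ℝ) (i : Fin n) : ℝ :=
  fderiv ℝ f x (Pi.single i 1)

noncomputable def hessQ {n : ℕ} (f : (Fin n → ℝ) → ℝ) (x w : Fin n → ℝ) : ℝ :=
  fderiv ℝ (fun y => fderiv ℝ f y w) x w

section SquareSubstitution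

variable {𝔸 : Type*} [NormedCommRing 𝔸] [NormedAlgebra ℝ 𝔸] {f : 𝔸 → ℝ}

open ContinuousLinearMap

theorem hasFDerivAt_mul_self (v : 𝔸) :
    HasFDerivAt (fun y : 𝔸 => y * y) ((2 : ℝ) • mul ℝ 𝔸 v) v :=
  ((hasFDerivAt_id v).mul (hasFDerivAt_id v)).congr_fderiv (by ext s; simp [two_smul])

theorem fderiv_comp_mul_self_apply {v : 𝔸} (hf : DifferentiableAt ℝ f (v * v)) (s : 𝔸) :
    fderiv ℝ (fun y => f (y * y)) v s = 2 * fderiv ℝ f (v * v) (v * s) := by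
  have h : HasFDerivAt (fun y => f (y * y)) _ v :=
    hf.hasFDerivAt.comp (f := fun y : 𝔸 => y * y) v (hasFDerivAt_mul_self v)
  rw [h.fderiv]
  simp

theorem fderiv_fderiv_comp_mul_self_apply (hf : ContDiff ℝ 2 f) (v s : 𝔸) :
    fderiv ℝ (fun y => fderiv ℝ (fun z => f (z * z)) y s) v s =
      4 * fderiv ℝ (fderiv ℝ f) (v * v) (v * s) (v * s) + 2 * fderiv ℝ f (v * v) (s * s) := by
  have hf₁ : Differentiable ℝ f := hf.differentiable (by norm_num)
  have hf₂ : Differentiable ℝ (fderiv ℝ f) :=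
    (hf.fderiv_right (m := 1) (by norm_num)).differentiable one_ne_zero
  have hfirst : (fun y => fderiv ℝ (fun z => f (z * z)) y s) =
      fun y => 2 * fderiv ℝ f (y * y) (mul ℝ 𝔸 s y) := by
    funext y
    rw [fderiv_comp_mul_self_apply (hf₁ _), mul_apply', mul_comm s]
  have hderiv : HasFDerivAt (fun y => 2 * fderiv ℝ f (y * y) (mul ℝ 𝔸 s y)) _ v :=
    (((hf₂ (v * v)).hasFDerivAt.comp (f := fun y : 𝔸 => y * y) v
      (hasFDerivAt_mul_self v)).clm_apply (mul ℝ 𝔸 s).hasFDerivAt).const_mul (2 : ℝ)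
  rw [hfirst, hderiv.fderiv]
  simp only [Function.comp_apply, comp_smulₛₗ, Real.ringHom_apply, flip_smul, mul_apply',
    mul_comm s v, smul_apply, smul_add, add_apply, comp_apply, smul_eq_mul, flip_apply]
  ring

end SquareSubstitution

section Coordinates

variable {n : ℕ} {f : (Fin n → ℝ) → ℝ}

theorem hessQ_eq_fderiv_fderiv {x : Fin n → ℝ} (hf : DifferentiableAt ℝ (fderiv ℝ f) x)
    (w : Fin n → ℝ) : hessQ f x w = fderiv ℝ (fderiv ℝ f) x w w := by
  rw [hessQ, fderiv_clm_apply hf (differentiableAt_const w)]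
  simp

theorem fderiv_apply_eq_sum_grad (x w : Fin n → ℝ) :
    fderiv ℝ f x w = ∑ i, w i * grad f x i := by
  conv_lhs => rw [pi_eq_sum_univ' w]
  simp [grad]

theorem grad_comp_mul_self (hf : Differentiable ℝ f) (v : Fin n → ℝ) (i : Fin n) :
    grad (fun y => f (y * y)) v i = 2 * v i * grad f (v * v) i := by
  rw [grad, fderiv_comp_mul_self_apply (hf _), ← Pi.single_mul_right, ← smul_eq_mul (v i) 1,
    Pi.single_smul', map_smul, grad, smul_eq_mul, mul_assoc]

theorem hessQ_comp_mul_self (hf : ContDiff ℝ 2 f) (v s : Fin n → ℝ) :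
    hessQ (fun y => f (y * y)) v s =
      4 * hessQ f (v * v) (v * s) + 2 * fderiv ℝ f (v * v) (s * s) := by
  have hf₂ : Differentiable ℝ (fderiv ℝ f) :=
    (hf.fderiv_right (m := 1) (by norm_num)).differentiable one_ne_zero
  rw [hessQ, fderiv_fderiv_comp_mul_self_apply hf, hessQ_eq_fderiv_fderiv (hf₂ _)]

theorem hessQ_comp_mul_self_single (hf : ContDiff ℝ 2 f) {v : Fin n → ℝ} {i : Fin n}
    (hv : v i = 0) : hessQ (fun y => f (y * y)) v (Pi.single i 1) = 2 * grad f (v * v) i := by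
  rw [hessQ_comp_mul_self hf, ← Pi.single_mul_right, hv, ← Pi.single_mul, zero_mul, one_mul,
    Pi.single_zero, hessQ, map_zero, grad, mul_zero, zero_add]

end Coordinates

theorem stmt5 {n : ℕ} (f : (Fin n → ℝ) → ℝ) (hf : ContDiff ℝ 2 f)
    (F : (Fin n → ℝ) → ℝ) (hF : ∀ v, F v = f (v * v))
    (vs : Fin n → ℝ)
    (hgrad : fderiv ℝ F vs = 0)
    (hpd : ∀ s : Fin n → ℝ, s ≠ 0 → 0 < hessQ F vs s)
    (xs : Fin n → ℝ) (hxdef : xs = vs * vs) :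
    (∀ i, 0 ≤ xs i) ∧ (∀ i, 0 ≤ grad f xs i) ∧
      (∀ i, (xs i ≠ 0 ∧ grad f xs i = 0) ∨ (xs i = 0 ∧ grad f xs i ≠ 0)) ∧
      (∀ w : Fin n → ℝ, w ≠ 0 → (∀ i, xs i = 0 → w i = 0) → 0 < hessQ f xs w) := by
  obtain rfl : F = fun v => f (v * v) := funext hF
  subst hxdef
  have hcompl : ∀ i, vs i = 0 ∨ grad f (vs * vs) i = 0 := fun i => by
    have h := grad_comp_mul_self (hf.differentiable (by norm_num)) vs i
    rw [grad, hgrad] at h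
    simpa using h.symm
  have hpos : ∀ i, vs i = 0 → 0 < grad f (vs * vs) i := fun i hvi => by
    have h := hpd (Pi.single i 1) (Pi.single_ne_zero_iff.2 one_ne_zero)
    rw [hessQ_comp_mul_self_single hf hvi] at h
    linarith
  refine ⟨fun i => mul_self_nonneg _, fun i => ?_, fun i => ?_, fun w hw hwx => ?_⟩
  · rcases hcompl i with hvi | hgi
    · exact (hpos i hvi).le
    · exact hgi.ge
  · by_cases hvi : vs i = 0
    · exact Or.inr ⟨by simp [hvi], (hpos i hvi).ne'⟩
    · exact Or.inl ⟨mul_self_ne_zero.2 hvi, (hcompl i).resolve_left hvi⟩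
  · -- `w / vs` vanishes where `vs` does, since `w i / 0 = 0`.
    have hvs : vs * (w / vs) = w := by
      ext i
      by_cases hvi : vs i = 0
      · simp [hvi, hwx i (by simp [hvi])]
      · simp [mul_div_cancel₀ _ hvi]
    have hgradTerm : fderiv ℝ f (vs * vs) (w / vs * (w / vs)) = 0 := by
      rw [fderiv_apply_eq_sum_grad]
      refine Finset.sum_eq_zero fun i _ => ?_
      rcases hcompl i with hvi | hgi
      · simp [hvi]
      · simp [hgi]
    have h := hpd (w / vs) fun h => hw (by rw [← hvs, h, mul_zero])
    rw [hessQ_comp_mul_self hf, hvs, hgradTerm] at h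
    linarith
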